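/- Let a_q be a fixed vertex and consider, inside a chain complex whose degree-d group is free on multisets of edges and loops with boundary as in the multiset chain complex construction, the subcomplex W spanned by generators σ in which a_q fails condition (I) (i.e., the loop a_qa_q appears in σ, or deg_σ(a_q) ≤ λ_{a_q} − 2). Then W has vanishing homology: every cycle c ∈ W, decomposed as c = a_qa_q ⊗ c' + c'' with no loop a_qa_q occurring in c' or c'', satisfies ∂c' = 0 and c' = −∂c'', whence c = ∂(a_qa_q ⊗ c'') is a boundary in W. -/

import Mathlib

open scoped Classical

noncomputable section

variable {V : Type*} [LinearOrder V]

/-- The chain group in "size" `s`: the free `R`-module on the multisets of size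
`s` belonging to the family `Δ`. -/
abbrev multisetChains (R : Type*) [CommRing R] (Δ : Set (Multiset V)) (s : ℕ) : Type _ :=
  {σ : Multiset V // σ ∈ Δ ∧ Multiset.card σ = s} →₀ R

/-- The generator of `multisetChains` corresponding to `τ` (zero if `τ ∉ Δ`). -/
def multisetGen (R : Type*) [CommRing R] (Δ : Set (Multiset V)) (s : ℕ)
    (τ : Multiset V) (c : R) : multisetChains R Δ s :=
  if h : τ ∈ Δ ∧ Multiset.card τ = s then Finsupp.single ⟨τ, h⟩ c else 0

/-- One term of the boundary of the multiset chain complex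
`C((Δ,E);R)`, with sign `(-1)^{d - ηᵢ}`. -/
def boundaryStep (R : Type*) [CommRing R] (Δ : Set (Multiset V)) (E : Set (Sym2 V))
    (s : ℕ) (σ : Multiset V) (x : V) (i : ℕ) : multisetChains R Δ s :=
  multisetGen R Δ s (σ.erase x)
    ((-1 : R) ^ (s - ((σ.sort (· ≤ ·)).drop (i + 1)).countP
      (fun y => decide (s(x, y) ∉ E))))

/-- The boundary of the generator corresponding to a multiset of size `s + 1`. -/
def boundaryGen (R : Type*) [CommRing R] (Δ : Set (Multiset V)) (E : Set (Sym2 V))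
    (s : ℕ) (σ : {σ : Multiset V // σ ∈ Δ ∧ Multiset.card σ = s + 1}) :
    multisetChains R Δ s :=
  ∑ i : Fin (s + 1),
    boundaryStep R Δ E s σ.1
      ((σ.1.sort (· ≤ ·)).get ⟨i.1, by rw [Multiset.length_sort, σ.2.2]; exact i.2⟩) i.1

/-- The boundary operator of the multiset chain complex `C((Δ,E);R)`. -/
def multisetBoundary (R : Type*) [CommRing R] (Δ : Set (Multiset V)) (E : Set (Sym2 V))
    (s : ℕ) : multisetChains R Δ (s + 1) →ₗ[R] multisetChains R Δ s :=
  Finsupp.lsum R fun σ =>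
    LinearMap.toSpanSingleton R (multisetChains R Δ s) (boundaryGen R Δ E s σ)

end

noncomputable section

variable (r : ℕ)

/-- An auxiliary linear order on the edges and loops on `Fin r`. -/
instance sym2LinearOrder : LinearOrder (Sym2 (Fin r)) :=
  LinearOrder.lift' (fun e => ((Fintype.equivFin (Sym2 (Fin r))) e : ℕ))
    (fun a b h => (Fintype.equivFin (Sym2 (Fin r))).injective (Fin.val_injective h))

/-- The degree of the vertex `a` in a multiset of edges and loops. -/
def multidegree (σ : Multiset (Sym2 (Fin r))) (a : Fin r) : ℕ :=
  (σ.map (fun e => if e = s(a, a) then 2 else if a ∈ e then 1 else 0)).sum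

/-- The family `Δ_{λ,s}` of admissible multisets of edges and loops. -/
def deltaFamily (lam : Fin r → ℕ) (ss : Fin r → Bool) :
    Set (Multiset (Sym2 (Fin r))) :=
  {σ | (∀ a : Fin r, ss a = true → multidegree r σ a ≤ lam a) ∧
       (∀ a : Fin r, ss a = false →
          lam a - 1 ≤ multidegree r σ a ∧ multidegree r σ a ≤ lam a ∧ s(a, a) ∉ σ) ∧
       (∀ e : Sym2 (Fin r), 2 ≤ σ.count e → ∃ a b : Fin r, e = s(a, b) ∧ ss a ≠ ss b)}

/-- The commutation relation `E_{λ,s}`: two edges commute iff neither is a loop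
and their intersection contains exactly one negatively charged vertex. -/
def commuteFamily (ss : Fin r → Bool) : Set (Sym2 (Sym2 (Fin r))) :=
  {q | ∃ e f : Sym2 (Fin r), q = s(e, f) ∧ ¬ e.IsDiag ∧ ¬ f.IsDiag ∧
        (∃! a : Fin r, a ∈ e ∧ a ∈ f ∧ ss a = false)}

end

/-!
The loop `e₀ = a_qa_q` anticommutes with every edge and loop, and adding or removing it only
changes the degree of the positively charged vertex `a_q`. So `h σ = ± e₀σ` (the sign of moving
`e₀` to its sorted position; `h σ = 0` if `e₀ ∈ σ`) is a contracting homotopy on `W`: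
`∂h + h∂ = id` on its generators. If `e₀ ∉ σ`, the term of `∂(e₀σ)` deleting `e₀` is `± σ` with
the sign of `h` squared away, and each other term cancels against the matching term of `h∂σ`,
because `e₀` sits on the same side of the deleted entry in both. If `e₀` occurs once in `σ`,
`h` kills `σ` and every term of `∂σ` except the one deleting `e₀`, which `h` sends back to `σ`.
So a cycle `c` of `W` is the boundary of `h c`, whose generators all contain `e₀`.
-/

theorem Finsupp.linearMap_apply_eq_self_of_single {α R : Type*} [Semiring R]
    (f : (α →₀ R) →ₗ[R] α →₀ R) (x : α →₀ R)
    (h : ∀ a ∈ x.support, f (Finsupp.single a 1) = Finsupp.single a 1) : f x = x := by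
  conv_lhs => rw [← x.sum_single]
  rw [map_finsuppSum]
  refine (Finsupp.sum_congr fun a ha => ?_).trans x.sum_single
  rw [← Finsupp.smul_single_one, map_smul, h a ha]

theorem neg_one_pow_mul_self {M : Type*} [Monoid M] [HasDistribNeg M] (n : ℕ) :
    (-1 : M) ^ n * (-1) ^ n = 1 := by
  rw [← pow_add, ← two_mul, pow_mul, neg_one_sq, one_pow]

theorem Multiset.coe_orderedInsert {V : Type*} [LinearOrder V] (a : V) (l : List V) :
    ((l.orderedInsert (· ≤ ·) a : List V) : Multiset V) = a ::ₘ l := by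
  rw [Multiset.cons_coe, Multiset.coe_eq_coe]
  exact l.perm_orderedInsert _ a

theorem Multiset.sort_cons_eq_orderedInsert {V : Type*} [LinearOrder V] (a : V)
    (σ : Multiset V) : (a ::ₘ σ).sort (· ≤ ·) = (σ.sort (· ≤ ·)).orderedInsert (· ≤ ·) a := by
  refine List.Perm.eq_of_pairwise' (Multiset.pairwise_sort _ _)
    ((Multiset.pairwise_sort σ _).orderedInsert a _) ?_
  rw [← Multiset.coe_eq_coe, Multiset.sort_eq, Multiset.coe_orderedInsert, Multiset.sort_eq]

noncomputable section MultisetComplex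

variable {V : Type*} {R : Type*} [CommRing R] {Δ : Set (Multiset V)} {E : Set (Sym2 V)} {s : ℕ}

theorem multisetGen_smul (τ : Multiset V) (a c : R) :
    a • multisetGen R Δ s τ c = multisetGen R Δ s τ (a * c) := by
  unfold multisetGen; split <;> simp [Finsupp.smul_single]

theorem multisetGen_add (τ : Multiset V) (a b : R) :
    multisetGen R Δ s τ a + multisetGen R Δ s τ b = multisetGen R Δ s τ (a + b) := by
  unfold multisetGen; split <;> simp

theorem multisetGen_zero (τ : Multiset V) : multisetGen R Δ s τ 0 = 0 := by
  unfold multisetGen; split <;> simp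

theorem single_eq_multisetGen (σ : {σ : Multiset V // σ ∈ Δ ∧ Multiset.card σ = s}) :
    Finsupp.single σ (1 : R) = multisetGen R Δ s σ.1 1 := by
  rw [multisetGen, dif_pos σ.2]

variable [LinearOrder V]

theorem multisetBoundary_multisetGen (τ : Multiset V) (c : R) :
    multisetBoundary R Δ E s (multisetGen R Δ (s + 1) τ c) =
      if h : τ ∈ Δ ∧ Multiset.card τ = s + 1 then c • boundaryGen R Δ E s ⟨τ, h⟩ else 0 := by
  unfold multisetGen
  split
  · simp [multisetBoundary]
  · exact map_zero _

variable (R Δ E) in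
/-- The terms of the boundary of the generator `μ + l`, for a sorted list `l`, that delete an
entry of `l`; the prefix `μ` of already visited entries does not affect the signs. -/
def partialBoundary (s : ℕ) : List V → Multiset V → multisetChains R Δ s
  | [], _ => 0
  | x :: l, μ =>
      multisetGen R Δ s (μ + l) ((-1) ^ (s - l.countP fun y => decide (s(x, y) ∉ E))) +
        partialBoundary s l (x ::ₘ μ)

theorem sum_boundaryStep_eq_partialBoundary : ∀ (l : List V) (μ : Multiset V),
    ∑ i : Fin l.length, multisetGen R Δ s ((μ + l).erase (l.get i))
      ((-1) ^ (s - (l.drop (i + 1)).countP fun y => decide (s(l.get i, y) ∉ E))) =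
      partialBoundary R Δ E s l μ
  | [], μ => by simp [partialBoundary]
  | x :: l, μ => by
    simp only [List.length_cons]
    rw [Fin.sum_univ_succ, partialBoundary,
      ← sum_boundaryStep_eq_partialBoundary l (x ::ₘ μ)]
    congr 1
    · rw [List.get_cons_zero, ← Multiset.cons_coe, Multiset.add_cons, Multiset.erase_cons_head]
      rfl
    · refine Finset.sum_congr rfl fun i _ => ?_
      rw [← Multiset.cons_coe, Multiset.add_cons, Multiset.cons_add]
      rfl

theorem boundaryGen_eq_partialBoundary (σ : {σ : Multiset V // σ ∈ Δ ∧ Multiset.card σ = s + 1}) :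
    boundaryGen R Δ E s σ = partialBoundary R Δ E s (σ.1.sort (· ≤ ·)) 0 := by
  have hl : (σ.1.sort (· ≤ ·)).length = s + 1 := by rw [Multiset.length_sort, σ.2.2]
  rw [← sum_boundaryStep_eq_partialBoundary, boundaryGen]
  refine (Fintype.sum_equiv (finCongr hl) _ _ fun i => ?_).symm
  simp only [boundaryStep, zero_add, Multiset.sort_eq]
  rfl

variable (R Δ) in
/-- The contracting homotopy `h`; its sign is that of moving `e₀` to its sorted position. -/
def coneMap (e₀ : V) (s : ℕ) : multisetChains R Δ s →ₗ[R] multisetChains R Δ (s + 1) :=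
  Finsupp.lsum R fun σ => LinearMap.toSpanSingleton R _
    (if e₀ ∈ σ.1 then 0 else multisetGen R Δ (s + 1) (e₀ ::ₘ σ.1) ((-1) ^ σ.1.countP (· < e₀)))

variable {e₀ : V}

theorem coneMap_multisetGen_of_mem {τ : Multiset V} (h : e₀ ∈ τ) (c : R) :
    coneMap R Δ e₀ s (multisetGen R Δ s τ c) = 0 := by
  unfold multisetGen
  split
  · simp [coneMap, h]
  · exact map_zero _

theorem coneMap_multisetGen_of_notMem (hcl : ∀ ρ, e₀ ::ₘ ρ ∈ Δ → ρ ∈ Δ) {τ : Multiset V}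
    (h : e₀ ∉ τ) (c : R) :
    coneMap R Δ e₀ s (multisetGen R Δ s τ c) =
      multisetGen R Δ (s + 1) (e₀ ::ₘ τ) (c * (-1) ^ τ.countP (· < e₀)) := by
  by_cases hτ : τ ∈ Δ ∧ Multiset.card τ = s
  · rw [multisetGen, dif_pos hτ, coneMap, Finsupp.lsum_single, LinearMap.toSpanSingleton_apply,
      if_neg h, multisetGen_smul]
  · rw [multisetGen, dif_neg hτ, map_zero, multisetGen, dif_neg]
    rintro ⟨hΔ, hcard⟩
    exact hτ ⟨hcl τ hΔ, by simpa using hcard⟩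

theorem coneMap_partialBoundary_of_mem (l : List V) :
    ∀ μ : Multiset V, e₀ ∈ μ → coneMap R Δ e₀ s (partialBoundary R Δ E s l μ) = 0 := by
  induction l with
  | nil => simp [partialBoundary]
  | cons x l ih =>
    intro μ hμ
    rw [partialBoundary, map_add, coneMap_multisetGen_of_mem (Multiset.mem_add.mpr (.inl hμ)),
      ih _ (Multiset.mem_cons_of_mem hμ), add_zero]

theorem coneMap_partialBoundary_of_lt (hcl : ∀ ρ, e₀ ::ₘ ρ ∈ Δ → ρ ∈ Δ) (l : List V) :
    ∀ μ : Multiset V, (∀ y ∈ l, e₀ < y) → e₀ ∉ μ → Multiset.card μ + l.length = s + 1 →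
      coneMap R Δ e₀ s (partialBoundary R Δ E s l μ) =
        (-1 : R) ^ (μ.countP (· < e₀) + 1) • partialBoundary R Δ E (s + 1) l (e₀ ::ₘ μ) := by
  induction l with
  | nil => simp [partialBoundary]
  | cons x l ih =>
    intro μ hl hμ hcard
    have hx : ¬x < e₀ := (hl x List.mem_cons_self).not_gt
    have hxμ : e₀ ∉ x ::ₘ μ := by
      simpa [hμ] using (hl x List.mem_cons_self).ne
    have hlμ : e₀ ∉ μ + l := by
      simpa [hμ] using fun h => (hl e₀ (List.mem_cons_of_mem x h)).false
    have hcount : (μ + l).countP (· < e₀) = μ.countP (· < e₀) := by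
      rw [Multiset.countP_add, Multiset.coe_countP, List.countP_eq_zero.mpr, add_zero]
      exact fun y hy => by simpa using (hl y (List.mem_cons_of_mem x hy)).le
    have hle : (l.countP fun y => decide (s(x, y) ∉ E)) ≤ s := by
      have := l.countP_le_length (p := fun y => decide (s(x, y) ∉ E))
      simp only [List.length_cons] at hcard
      omega
    rw [partialBoundary, partialBoundary, map_add, coneMap_multisetGen_of_notMem hcl hlμ,
      ih _ (fun y hy => hl y (List.mem_cons_of_mem x hy)) hxμ
        (by simp only [Multiset.card_cons, List.length_cons] at hcard ⊢; omega),
      smul_add, multisetGen_smul, Multiset.countP_cons_of_neg (p := (· < e₀)) μ hx,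
      Multiset.cons_swap e₀ x, hcount, Multiset.cons_add, Nat.sub_add_comm hle]
    congr 2
    ring

theorem coneMap_partialBoundary_orderedInsert (hcl : ∀ ρ, e₀ ::ₘ ρ ∈ Δ → ρ ∈ Δ)
    (hE : ∀ y, s(e₀, y) ∉ E) (l : List V) (hl : l.Pairwise (· ≤ ·)) (he : e₀ ∉ l) :
    ∀ μ : Multiset V, (∀ y ∈ μ, y < e₀) → Multiset.card μ + l.length = s →
      coneMap R Δ e₀ s (partialBoundary R Δ E s (l.orderedInsert (· ≤ ·) e₀) μ) =
        multisetGen R Δ (s + 1) (e₀ ::ₘ (μ + l)) 1 := by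
  induction l with
  | nil =>
    intro μ hμ hcard
    simp only [List.orderedInsert_nil, partialBoundary, List.countP_nil, Nat.sub_zero, add_zero,
      Multiset.coe_nil, List.length_nil] at hcard ⊢
    rw [coneMap_multisetGen_of_notMem hcl fun h => (hμ e₀ h).false,
      Multiset.countP_eq_card.mpr hμ, hcard, neg_one_pow_mul_self]
  | cons x l ih =>
    intro μ hμ hcard
    have hμe : e₀ ∉ μ := fun h => (hμ e₀ h).false
    obtain hx | hx := lt_or_gt_of_ne (ne_of_mem_of_not_mem List.mem_cons_self he)
    · rw [List.orderedInsert_of_not_le (· ≤ ·) _ hx.not_ge, partialBoundary, map_add,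
        coneMap_multisetGen_of_mem (by simp [Multiset.coe_orderedInsert]), zero_add,
        ih (List.pairwise_cons.mp hl).2 (fun h => he (List.mem_cons_of_mem x h)) (x ::ₘ μ)
          (by simpa [hx] using hμ)
          (by simp only [Multiset.card_cons, List.length_cons] at hcard ⊢; omega),
        ← Multiset.cons_coe, Multiset.add_cons, Multiset.cons_add]
    · have hgt : ∀ y ∈ x :: l, e₀ < y := fun y hy =>
        (List.mem_cons.mp hy).elim (· ▸ hx) fun hy => hx.trans_le (List.rel_of_pairwise_cons hl hy)
      have hcount : (μ + ↑(x :: l)).countP (· < e₀) = Multiset.card μ := by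
        rw [Multiset.countP_add, Multiset.countP_eq_card.mpr hμ, Multiset.coe_countP,
          List.countP_eq_zero.mpr fun y hy => by simpa using (hgt y hy).le, add_zero]
      rw [List.orderedInsert_cons_of_le (· ≤ ·) _ hx.le, partialBoundary, map_add,
        coneMap_partialBoundary_of_mem _ _ (Multiset.mem_cons_self e₀ μ), add_zero,
        coneMap_multisetGen_of_notMem hcl (by simpa [hμe] using fun h => (hgt e₀ h).false),
        List.countP_eq_length.mpr fun y _ => by simpa using hE y, hcount]
      simp only [List.length_cons] at hcard
      rw [List.length_cons, show s - (l.length + 1) = Multiset.card μ by omega,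
        neg_one_pow_mul_self]

theorem smul_multisetGen_orderedInsert_add_coneMap_eq_zero (hcl : ∀ ρ, e₀ ::ₘ ρ ∈ Δ → ρ ∈ Δ)
    (hE : ∀ y, s(e₀, y) ∉ E) (x : V) {l : List V} (he : e₀ ∉ l) {μ : Multiset V}
    (hμ : ∀ y ∈ μ, y < e₀) :
    (-1 : R) ^ (Multiset.card μ + l.countP (· < e₀) + 1) •
        multisetGen R Δ (s + 1) (μ + ↑(l.orderedInsert (· ≤ ·) e₀))
          ((-1) ^ (s + 1 - (l.orderedInsert (· ≤ ·) e₀).countP fun y => decide (s(x, y) ∉ E))) +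
      coneMap R Δ e₀ s
        (multisetGen R Δ s (μ + l) ((-1) ^ (s - l.countP fun y => decide (s(x, y) ∉ E)))) =
      0 := by
  have hxe : s(x, e₀) ∉ E := Sym2.eq_swap (a := x) ▸ hE x
  have hμl : e₀ ∉ μ + l := by
    simpa using ⟨fun h => (hμ e₀ h).false, he⟩
  rw [coneMap_multisetGen_of_notMem hcl hμl, Multiset.coe_orderedInsert, Multiset.add_cons,
    multisetGen_smul, multisetGen_add, (l.perm_orderedInsert _ e₀).countP_eq,
    List.countP_cons_of_pos (p := fun y => decide (s(x, y) ∉ E)) (by simpa using hxe),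
    Nat.add_sub_add_right, Multiset.countP_add, Multiset.countP_eq_card.mpr hμ,
    Multiset.coe_countP, ← multisetGen_zero]
  congr 1
  ring

theorem partialBoundary_orderedInsert_add_coneMap (hcl : ∀ ρ, e₀ ::ₘ ρ ∈ Δ → ρ ∈ Δ)
    (hE : ∀ y, s(e₀, y) ∉ E) (l : List V) (hl : l.Pairwise (· ≤ ·)) (he : e₀ ∉ l) :
    ∀ μ : Multiset V, (∀ y ∈ μ, y < e₀) → Multiset.card μ + l.length = s + 1 →
      (-1 : R) ^ (Multiset.card μ + l.countP (· < e₀)) •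
          partialBoundary R Δ E (s + 1) (l.orderedInsert (· ≤ ·) e₀) μ +
        coneMap R Δ e₀ s (partialBoundary R Δ E s l μ) =
        multisetGen R Δ (s + 1) (μ + l) 1 := by
  induction l with
  | nil =>
    intro μ _ hcard
    simp only [List.orderedInsert_nil, partialBoundary, List.countP_nil, Nat.sub_zero,
      map_zero, add_zero, Multiset.coe_nil, List.length_nil] at hcard ⊢
    rw [multisetGen_smul, hcard, neg_one_pow_mul_self]
  | cons x l ih =>
    intro μ hμ hcard
    obtain hx | hx := lt_or_gt_of_ne (ne_of_mem_of_not_mem List.mem_cons_self he)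
    · have hel : e₀ ∉ l := fun h => he (List.mem_cons_of_mem x h)
      rw [List.orderedInsert_of_not_le (· ≤ ·) _ hx.not_ge, partialBoundary, partialBoundary,
        List.countP_cons_of_pos (p := fun y => decide (y < e₀)) (by simpa using hx), ← add_assoc,
        map_add, smul_add, add_add_add_comm,
        smul_multisetGen_orderedInsert_add_coneMap_eq_zero hcl hE x hel hμ, zero_add,
        add_right_comm, ← Multiset.card_cons x, ← Multiset.cons_coe, Multiset.add_cons,
        ← Multiset.cons_add]
      exact ih (List.pairwise_cons.mp hl).2 hel (x ::ₘ μ) (by simpa [hx] using hμ)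
        (by simp only [Multiset.card_cons, List.length_cons] at hcard ⊢; omega)
    · have hgt : ∀ y ∈ x :: l, e₀ < y := fun y hy =>
        (List.mem_cons.mp hy).elim (· ▸ hx) fun hy => hx.trans_le (List.rel_of_pairwise_cons hl hy)
      simp only [List.length_cons] at hcard
      rw [List.orderedInsert_cons_of_le (· ≤ ·) _ hx.le, partialBoundary,
        List.countP_eq_length (p := fun y => decide (s(e₀, y) ∉ E)) |>.mpr fun y _ => by
          simpa using hE y,
        List.countP_eq_zero (p := fun y => decide (y < e₀)) |>.mpr fun y hy => by
          simpa using (hgt y hy).le,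
        coneMap_partialBoundary_of_lt hcl _ _ hgt (fun h => (hμ e₀ h).false)
          (by simp only [List.length_cons]; omega),
        Multiset.countP_eq_card.mpr hμ, smul_add, multisetGen_smul, add_zero, List.length_cons,
        show s + 1 - (l.length + 1) = Multiset.card μ by omega, neg_one_pow_mul_self, add_assoc,
        ← add_smul, pow_succ, mul_neg_one, add_neg_cancel, zero_smul, add_zero]

theorem multisetBoundary_single (σ : {σ : Multiset V // σ ∈ Δ ∧ Multiset.card σ = s + 1}) :
    multisetBoundary R Δ E s (Finsupp.single σ 1) = boundaryGen R Δ E s σ := by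
  simp [multisetBoundary]

theorem coneMap_apply_eq_zero (c : multisetChains R Δ s)
    (τ : {σ : Multiset V // σ ∈ Δ ∧ Multiset.card σ = s + 1}) (hτ : e₀ ∉ τ.1) :
    coneMap R Δ e₀ s c τ = 0 := by
  induction c using Finsupp.induction_linear with
  | zero => simp
  | add f g hf hg => simp [hf, hg]
  | single σ a =>
    rw [coneMap, Finsupp.lsum_single, LinearMap.toSpanSingleton_apply]
    split_ifs
    · simp
    · unfold multisetGen
      split_ifs with h
      · rw [Finsupp.smul_apply, Finsupp.single_eq_of_ne, smul_zero]
        rintro rfl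
        exact hτ (Multiset.mem_cons_self e₀ σ.1)
      · simp

theorem mem_of_mem_support_coneMap (c : multisetChains R Δ s)
    {τ : {σ : Multiset V // σ ∈ Δ ∧ Multiset.card σ = s + 1}}
    (hτ : τ ∈ (coneMap R Δ e₀ s c).support) : e₀ ∈ τ.1 := by
  by_contra h
  exact Finsupp.mem_support_iff.mp hτ (coneMap_apply_eq_zero c τ h)

variable (Δ) in
def IsConeable (e₀ : V) (σ : Multiset V) : Prop :=
  (∃ ρ, e₀ ∉ ρ ∧ σ = e₀ ::ₘ ρ) ∨ (e₀ ∉ σ ∧ e₀ ::ₘ σ ∈ Δ)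

theorem coneMap_multisetBoundary_single_of_eq_cons (hcl : ∀ ρ, e₀ ::ₘ ρ ∈ Δ → ρ ∈ Δ)
    (hE : ∀ y, s(e₀, y) ∉ E) (σ : {σ : Multiset V // σ ∈ Δ ∧ Multiset.card σ = s + 1})
    {ρ : Multiset V} (hρ : e₀ ∉ ρ) (hσ : σ.1 = e₀ ::ₘ ρ) :
    coneMap R Δ e₀ s (multisetBoundary R Δ E s (Finsupp.single σ 1)) = Finsupp.single σ 1 := by
  have hcard : Multiset.card ρ = s := by
    simpa [hσ] using σ.2.2
  rw [multisetBoundary_single, boundaryGen_eq_partialBoundary, hσ,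
    Multiset.sort_cons_eq_orderedInsert,
    coneMap_partialBoundary_orderedInsert hcl hE _ (Multiset.pairwise_sort _ _) (by simpa using hρ)
      0 (by simp) (by simpa using hcard),
    zero_add, Multiset.sort_eq, ← hσ, single_eq_multisetGen]

theorem multisetBoundary_coneMap_add_coneMap_multisetBoundary_single_of_notMem
    (hcl : ∀ ρ, e₀ ::ₘ ρ ∈ Δ → ρ ∈ Δ) (hE : ∀ y, s(e₀, y) ∉ E)
    (σ : {σ : Multiset V // σ ∈ Δ ∧ Multiset.card σ = s + 1}) (h : e₀ ∉ σ.1)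
    (hΔ : e₀ ::ₘ σ.1 ∈ Δ) :
    multisetBoundary R Δ E (s + 1) (coneMap R Δ e₀ (s + 1) (Finsupp.single σ 1)) +
        coneMap R Δ e₀ s (multisetBoundary R Δ E s (Finsupp.single σ 1)) =
      Finsupp.single σ 1 := by
  have key := partialBoundary_orderedInsert_add_coneMap (R := R) (Δ := Δ) (s := s) hcl hE
    (σ.1.sort (· ≤ ·)) (Multiset.pairwise_sort _ _) (by simpa using h) 0 (by simp)
    (by simp [σ.2.2])
  rw [Multiset.card_zero, zero_add, ← Multiset.coe_countP, Multiset.sort_eq, zero_add,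
    ← boundaryGen_eq_partialBoundary, ← multisetBoundary_single] at key
  rw [single_eq_multisetGen, coneMap_multisetGen_of_notMem hcl h, multisetBoundary_multisetGen,
    dif_pos ⟨hΔ, by rw [Multiset.card_cons, σ.2.2]⟩, boundaryGen_eq_partialBoundary,
    Multiset.sort_cons_eq_orderedInsert, one_mul, ← single_eq_multisetGen, key,
    single_eq_multisetGen]

theorem multisetBoundary_coneMap_add_coneMap_multisetBoundary (hcl : ∀ ρ, e₀ ::ₘ ρ ∈ Δ → ρ ∈ Δ)
    (hE : ∀ y, s(e₀, y) ∉ E) (c : multisetChains R Δ (s + 1))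
    (hc : ∀ σ ∈ c.support, IsConeable Δ e₀ σ.1) :
    multisetBoundary R Δ E (s + 1) (coneMap R Δ e₀ (s + 1) c) +
        coneMap R Δ e₀ s (multisetBoundary R Δ E s c) = c := by
  refine Finsupp.linearMap_apply_eq_self_of_single
    ((multisetBoundary R Δ E (s + 1)).comp (coneMap R Δ e₀ (s + 1)) +
      (coneMap R Δ e₀ s).comp (multisetBoundary R Δ E s)) c fun σ hσ => ?_
  rcases hc σ hσ with ⟨ρ, hρ, hσρ⟩ | ⟨h, hΔ⟩
  · rw [LinearMap.add_apply, LinearMap.comp_apply, LinearMap.comp_apply, single_eq_multisetGen,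
      coneMap_multisetGen_of_mem (hσρ ▸ Multiset.mem_cons_self e₀ ρ), map_zero, zero_add,
      ← single_eq_multisetGen, coneMap_multisetBoundary_single_of_eq_cons hcl hE σ hρ hσρ]
  · exact multisetBoundary_coneMap_add_coneMap_multisetBoundary_single_of_notMem hcl hE σ h hΔ

theorem multisetBoundary_coneMap_zero (hcl : ∀ ρ, e₀ ::ₘ ρ ∈ Δ → ρ ∈ Δ)
    (c : multisetChains R Δ 0) (hc : ∀ σ ∈ c.support, e₀ ::ₘ σ.1 ∈ Δ) :
    multisetBoundary R Δ E 0 (coneMap R Δ e₀ 0 c) = c := by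
  refine Finsupp.linearMap_apply_eq_self_of_single
    ((multisetBoundary R Δ E 0).comp (coneMap R Δ e₀ 0)) c fun σ hσ => ?_
  have hσ0 : σ.1 = 0 := Multiset.card_eq_zero.mp σ.2.2
  rw [LinearMap.comp_apply, single_eq_multisetGen, hσ0,
    coneMap_multisetGen_of_notMem hcl (Multiset.notMem_zero e₀), multisetBoundary_multisetGen,
    dif_pos ⟨hσ0 ▸ hc σ hσ, rfl⟩, boundaryGen_eq_partialBoundary]
  simp [partialBoundary]

end MultisetComplex

theorem loop_notMem_commuteFamily {r : ℕ} (ss : Fin r → Bool) (a : Fin r) (y : Sym2 (Fin r)) :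
    s(s(a, a), y) ∉ commuteFamily r ss := by
  rintro ⟨e, f, heq, he, hf, -⟩
  rcases Sym2.eq_iff.mp heq with ⟨rfl, -⟩ | ⟨rfl, -⟩
  · exact he (Sym2.mk_isDiag_iff.mpr rfl)
  · exact hf (Sym2.mk_isDiag_iff.mpr rfl)

theorem multidegree_cons_loop {r : ℕ} (a b : Fin r) (ρ : Multiset (Sym2 (Fin r))) :
    multidegree r (s(a, a) ::ₘ ρ) b = multidegree r ρ b + if b = a then 2 else 0 := by
  by_cases h : b = a
  · subst h
    simp [multidegree, add_comm]
  · simp [multidegree, h, Ne.symm h]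

section

variable {r : ℕ} {lam : Fin r → ℕ} {ss : Fin r → Bool} {a : Fin r}

theorem count_loop_le_one {σ : Multiset (Sym2 (Fin r))} (hσ : σ ∈ deltaFamily r lam ss) :
    σ.count s(a, a) ≤ 1 := by
  by_contra h
  obtain ⟨b, c, hbc, hne⟩ := hσ.2.2 s(a, a) (by omega)
  rcases Sym2.eq_iff.mp hbc with ⟨rfl, rfl⟩ | ⟨rfl, rfl⟩ <;> exact hne rfl

theorem mem_deltaFamily_of_cons_loop (hq : ss a = true) {ρ : Multiset (Sym2 (Fin r))}
    (h : s(a, a) ::ₘ ρ ∈ deltaFamily r lam ss) : ρ ∈ deltaFamily r lam ss := by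
  obtain ⟨hpos, hneg, hmult⟩ := h
  refine ⟨fun b hb => ?_, fun b hb => ?_, fun e he => hmult e ?_⟩
  · have := hpos b hb
    rw [multidegree_cons_loop] at this
    omega
  · have hba : b ≠ a := by rintro rfl; simp [hq] at hb
    obtain ⟨hlo, hhi, hnl⟩ := hneg b hb
    rw [multidegree_cons_loop, if_neg hba, add_zero] at hlo hhi
    exact ⟨hlo, hhi, fun hm => hnl (Multiset.mem_cons_of_mem hm)⟩
  · rw [Multiset.count_cons]
    omega

theorem cons_loop_mem_deltaFamily (hq : ss a = true) {ρ : Multiset (Sym2 (Fin r))}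
    (hρ : ρ ∈ deltaFamily r lam ss) (hnl : s(a, a) ∉ ρ) (hdeg : multidegree r ρ a + 2 ≤ lam a) :
    s(a, a) ::ₘ ρ ∈ deltaFamily r lam ss := by
  obtain ⟨hpos, hneg, hmult⟩ := hρ
  refine ⟨fun b hb => ?_, fun b hb => ?_, fun e he => ?_⟩
  · rw [multidegree_cons_loop]
    split_ifs with hba
    · exact hba ▸ hdeg
    · exact (add_zero _).trans_le (hpos b hb)
  · have hba : b ≠ a := by rintro rfl; simp [hq] at hb
    obtain ⟨hlo, hhi, hnl'⟩ := hneg b hb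
    rw [multidegree_cons_loop, if_neg hba, add_zero]
    refine ⟨hlo, hhi, fun hm => ?_⟩
    rcases Multiset.mem_cons.mp hm with h | h
    · exact hba (by simpa [Sym2.eq_iff] using h)
    · exact hnl' h
  · by_cases hea : e = s(a, a)
    · subst hea
      rw [Multiset.count_cons_self, Multiset.count_eq_zero.mpr hnl] at he
      omega
    · exact hmult e (by rwa [Multiset.count_cons_of_ne hea] at he)

theorem isConeable_loop (hq : ss a = true) {σ : Multiset (Sym2 (Fin r))}
    (hσ : σ ∈ deltaFamily r lam ss) (hbad : s(a, a) ∈ σ ∨ multidegree r σ a + 2 ≤ lam a) :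
    IsConeable (deltaFamily r lam ss) s(a, a) σ := by
  by_cases hm : s(a, a) ∈ σ
  · refine .inl ⟨σ.erase s(a, a), ?_, (Multiset.cons_erase hm).symm⟩
    rw [← Multiset.count_eq_zero, Multiset.count_erase_self]
    have := count_loop_le_one (a := a) hσ
    omega
  · exact .inr ⟨hm, cons_loop_mem_deltaFamily hq hσ hm (hbad.resolve_left hm)⟩

end

theorem stmt_12_general (r : ℕ) (R : Type*) [CommRing R] (lam : Fin r → ℕ)
    (ss : Fin r → Bool) (aq : Fin r) (hq : ss aq = true) :
    ∀ bad : Multiset (Sym2 (Fin r)) → Prop,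
      (∀ σ, bad σ ↔ (s(aq, aq) ∈ σ ∨ multidegree r σ aq + 2 ≤ lam aq)) →
      -- every cycle in `W` is a boundary in `W` ...
      (∀ (s : ℕ) (c : multisetChains R (deltaFamily r lam ss) (s + 1)),
        (∀ σ ∈ c.support, bad σ.1) →
        multisetBoundary R (deltaFamily r lam ss) (commuteFamily r ss) s c = 0 →
        ∃ b : multisetChains R (deltaFamily r lam ss) (s + 2),
          (∀ σ ∈ b.support, bad σ.1) ∧
          multisetBoundary R (deltaFamily r lam ss) (commuteFamily r ss) (s + 1) b = c) ∧
      -- ... including in the bottom degree, where every chain is a cycle: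
      (∀ c : multisetChains R (deltaFamily r lam ss) 0,
        (∀ σ ∈ c.support, bad σ.1) →
        ∃ b : multisetChains R (deltaFamily r lam ss) 1,
          (∀ σ ∈ b.support, bad σ.1) ∧
          multisetBoundary R (deltaFamily r lam ss) (commuteFamily r ss) 0 b = c) := by
  intro bad hbad
  have hcl (ρ) : s(aq, aq) ::ₘ ρ ∈ deltaFamily r lam ss → ρ ∈ deltaFamily r lam ss :=
    mem_deltaFamily_of_cons_loop hq
  have hcone {n} (σ : {σ // σ ∈ deltaFamily r lam ss ∧ Multiset.card σ = n}) (h : bad σ.1) :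
      IsConeable (deltaFamily r lam ss) s(aq, aq) σ.1 :=
    isConeable_loop hq σ.2.1 ((hbad σ.1).mp h)
  have hbad_coneMap {n} (c : multisetChains R (deltaFamily r lam ss) n) :
      ∀ σ ∈ (coneMap R _ s(aq, aq) n c).support, bad σ.1 :=
    fun σ hσ => (hbad σ.1).mpr (.inl (mem_of_mem_support_coneMap c hσ))
  refine ⟨fun s c hc hcyc => ⟨coneMap R _ s(aq, aq) (s + 1) c, hbad_coneMap c, ?_⟩,
    fun c hc => ⟨coneMap R _ s(aq, aq) 0 c, hbad_coneMap c, ?_⟩⟩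
  · simpa [hcyc] using multisetBoundary_coneMap_add_coneMap_multisetBoundary hcl
      (loop_notMem_commuteFamily ss aq) c fun σ hσ => hcone σ (hc σ hσ)
  · refine multisetBoundary_coneMap_zero hcl c fun σ hσ => ?_
    rcases hcone σ (hc σ hσ) with ⟨ρ, -, hσρ⟩ | ⟨-, h⟩
    · simpa [hσρ] using σ.2.2
    · exact h

/-- Inside the chain complex `C((Δ_{λ,s}, E_{λ,s}); R)`, where the vertex `a_q`
is positively charged, let `W` be the subcomplex spanned by the generators `σ`
in which `a_q` fails condition (I), i.e. the loop `a_qa_q` appears in `σ` or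
`deg_σ(a_q) ≤ λ_{a_q} - 2`.  Then `W` has vanishing homology: every cycle
supported on such generators is the boundary of a chain supported on such
generators (in the paper's notation, a cycle `c = a_qa_q ⊗ c' + c''` satisfies
`∂c' = 0` and `c' = -∂c''`, whence `c = ∂(a_qa_q ⊗ c'')`). -/
theorem stmt_12 (r : ℕ) (R : Type*) [CommRing R] (lam : Fin r → ℕ)
    (hlam : ∀ a, 0 < lam a) (ss : Fin r → Bool) (aq : Fin r) (hq : ss aq = true) :
    ∀ bad : Multiset (Sym2 (Fin r)) → Prop,
      (∀ σ, bad σ ↔ (s(aq, aq) ∈ σ ∨ multidegree r σ aq + 2 ≤ lam aq)) →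
      -- every cycle in `W` is a boundary in `W` ...
      (∀ (s : ℕ) (c : multisetChains R (deltaFamily r lam ss) (s + 1)),
        (∀ σ ∈ c.support, bad σ.1) →
        multisetBoundary R (deltaFamily r lam ss) (commuteFamily r ss) s c = 0 →
        ∃ b : multisetChains R (deltaFamily r lam ss) (s + 2),
          (∀ σ ∈ b.support, bad σ.1) ∧
          multisetBoundary R (deltaFamily r lam ss) (commuteFamily r ss) (s + 1) b = c) ∧
      -- ... including in the bottom degree, where every chain is a cycle:
      (∀ c : multisetChains R (deltaFamily r lam ss) 0,
        (∀ σ ∈ c.support, bad σ.1) →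
        ∃ b : multisetChains R (deltaFamily r lam ss) 1,
          (∀ σ ∈ b.support, bad σ.1) ∧
          multisetBoundary R (deltaFamily r lam ss) (commuteFamily r ss) 0 b = c) :=
  stmt_12_general r R lam ss aq hq
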